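/- Let λ be a nonzero complex number and δ ∈ ℂ[P] a polynomial. Define operators on ℂ[P,Q]: L_m f(P,Q) = λ^m (Q + mδ(P)) f(P, Q-m), H_m f(P,Q) = λ^m P f(P, Q-m), for m ∈ ℤ. Then [L_m, L_n] = (n-m) L_{m+n} and [L_m, H_n] = n H_{m+n} as operators on ℂ[P,Q]. -/
import Mathlib


open MvPolynomial

/-- Substitution `f(P,Q) ↦ f(P, Q-m)` on `ℂ[P,Q]`, as a linear map. -/
noncomputable def subQm (m : ℂ) : MvPolynomial (Fin 2) ℂ →ₗ[ℂ] MvPolynomial (Fin 2) ℂ :=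
  (aeval ![X 0, X 1 - C m] : MvPolynomial (Fin 2) ℂ →ₐ[ℂ] MvPolynomial (Fin 2) ℂ).toLinearMap

/-- `L_m f(P,Q) = λ^m (Q + m δ(P)) f(P, Q-m)`, where `δ ∈ ℂ[P]`. -/
noncomputable def opLd (lam : ℂ) (delta : Polynomial ℂ) (m : ℤ) :
    MvPolynomial (Fin 2) ℂ →ₗ[ℂ] MvPolynomial (Fin 2) ℂ :=
  lam ^ m • (LinearMap.mulLeft ℂ (X 1 + (m : ℂ) • Polynomial.aeval (X 0) delta) ∘ₗ subQm (m : ℂ))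

/-- `H_m f(P,Q) = λ^m P f(P, Q-m)`. -/
noncomputable def opHd (lam : ℂ) (m : ℤ) :
    MvPolynomial (Fin 2) ℂ →ₗ[ℂ] MvPolynomial (Fin 2) ℂ :=
  lam ^ m • (LinearMap.mulLeft ℂ (X 0) ∘ₗ subQm (m : ℂ))

lemma subQm_mul (m : ℂ) (f g : MvPolynomial (Fin 2) ℂ) :
    subQm m (f * g) = subQm m f * subQm m g := map_mul (aeval ![X 0, X 1 - C m]) f g

lemma subQm_C (m a : ℂ) : subQm m (C a) = C a := by simp [subQm]
lemma subQm_X0 (m : ℂ) : subQm m (X 0) = X 0 := by simp [subQm]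
lemma subQm_X1 (m : ℂ) : subQm m (X 1) = X 1 - C m := by simp [subQm]

lemma subQm_delta (m : ℂ) (delta : Polynomial ℂ) :
    subQm m (Polynomial.aeval (X 0) delta) = Polynomial.aeval (X 0 : MvPolynomial (Fin 2) ℂ) delta := by
  show (aeval ![X 0, X 1 - C m]) (Polynomial.aeval (X 0) delta) = _
  rw [← Polynomial.aeval_algHom_apply]
  simp

lemma subQm_comp (m n : ℂ) : subQm m ∘ₗ subQm n = subQm (m + n) := by
  have : ((aeval ![X 0, X 1 - C m]).comp (aeval ![X 0, X 1 - C n]) :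
      MvPolynomial (Fin 2) ℂ →ₐ[ℂ] MvPolynomial (Fin 2) ℂ) = aeval ![X 0, X 1 - C (m + n)] := by
    apply MvPolynomial.algHom_ext
    intro i
    fin_cases i <;> simp [map_sub, sub_sub]
  refine LinearMap.ext fun f => ?_
  have := congrArg (fun φ => φ f) this
  simpa [subQm] using this

lemma subQm_subQm (m n : ℂ) (f : MvPolynomial (Fin 2) ℂ) :
    subQm m (subQm n f) = subQm (m + n) f :=
  congrArg (fun φ : _ →ₗ[ℂ] _ => φ f) (subQm_comp m n)

theorem stmt17 (lam : ℂ) (hlam : lam ≠ 0) (delta : Polynomial ℂ) (m n : ℤ) :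
    opLd lam delta m ∘ₗ opLd lam delta n - opLd lam delta n ∘ₗ opLd lam delta m
        = ((n : ℂ) - (m : ℂ)) • opLd lam delta (m + n) ∧
    opLd lam delta m ∘ₗ opHd lam n - opHd lam n ∘ₗ opLd lam delta m
        = (n : ℂ) • opHd lam (m + n) := by
  have hz : lam ^ (m + n) = lam ^ m * lam ^ n := zpow_add₀ hlam m n
  constructor <;> refine LinearMap.ext fun f => ?_ <;>
    simp only [opLd, opHd, LinearMap.sub_apply, LinearMap.comp_apply, LinearMap.smul_apply,
      LinearMap.mulLeft_apply, map_smul, map_mul, map_add, subQm_X1, subQm_X0, subQm_delta,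
      subQm_mul, subQm_C, subQm_subQm, smul_smul, Int.cast_add, hz] <;>
    rw [show ((m:ℂ) + (n:ℂ)) = ((n:ℂ) + (m:ℂ)) by ring] <;>
    simp only [smul_eq_C_mul, map_add, map_mul, map_sub, MvPolynomial.smul_eq_C_mul] <;>
    ring
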